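/- arXiv:1512.04499 — 3 statements merged into one kernel-verified Lean document; each statement's English description precedes it below -/
import Mathlib

section
/- Let $t_1,t_2\in[0,1]$. Suppose $F^0_1,F^0_2,F^1_1,F^1_2:[0,1]\to\mathbb{R}$ satisfy $0\le F^0_k(t)\le F^1_k(t)$ for all $t\in[0,1]$ and $k=1,2$. Let $\pi_{00},\pi_{01},\pi_{10},\pi_{11}\ge 0$ with $\pi_{00}+\pi_{01}+\pi_{10}+\pi_{11}=1$, set $\pi_1=\pi_{10}+\pi_{11}$, $\pi_2=\pi_{01}+\pi_{11}$, and define $F_k(t)=(1-\pi_k)F^0_k(t)+\pi_k F^1_k(t)$. If $\pi_{11}\ge\pi_1\pi_2$, then $F_1(t_1)F_2(t_2)\ge \pi_{00}F^0_1(t_1)F^0_2(t_2)+\pi_{01}F^0_1(t_1)F^1_2(t_2)+\pi_{10}F^1_1(t_1)F^0_2(t_2)$. -/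
/-- Key inequality (equation (5)) underlying the conservative FDR estimator:
the product of the mixture marginals dominates the limiting expected proportion
of non-simultaneous signals in the rectangle `[0,t₁] × [0,t₂]`. -/
theorem key_inequality
    (t1 t2 : ℝ) (ht1 : t1 ∈ Set.Icc (0:ℝ) 1) (ht2 : t2 ∈ Set.Icc (0:ℝ) 1)
    (F01 F02 F11 F12 : ℝ → ℝ)
    (h1 : ∀ t ∈ Set.Icc (0:ℝ) 1, 0 ≤ F01 t ∧ F01 t ≤ F11 t)
    (h2 : ∀ t ∈ Set.Icc (0:ℝ) 1, 0 ≤ F02 t ∧ F02 t ≤ F12 t)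
    (π00 π01 π10 π11 : ℝ)
    (hπ00 : 0 ≤ π00) (hπ01 : 0 ≤ π01) (hπ10 : 0 ≤ π10) (hπ11 : 0 ≤ π11)
    (hsum : π00 + π01 + π10 + π11 = 1)
    (hdep : π11 ≥ (π10 + π11) * (π01 + π11)) :
    ((1 - (π10 + π11)) * F01 t1 + (π10 + π11) * F11 t1) *
        ((1 - (π01 + π11)) * F02 t2 + (π01 + π11) * F12 t2) ≥
      π00 * (F01 t1 * F02 t2) + π01 * (F01 t1 * F12 t2) + π10 * (F11 t1 * F02 t2) := by
  obtain ⟨ha0, ha1⟩ := h1 t1 ht1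
  obtain ⟨hb0, hb1⟩ := h2 t2 ht2
  set a0 := F01 t1; set a1 := F11 t1; set b0 := F02 t2; set b1 := F12 t2
  set δ := π11 - (π10 + π11) * (π01 + π11) with hδ
  have hδ0 : 0 ≤ δ := by linarith
  have e : ((1 - (π10 + π11)) * a0 + (π10 + π11) * a1) *
      ((1 - (π01 + π11)) * b0 + (π01 + π11) * b1) -
      (π00 * (a0 * b0) + π01 * (a0 * b1) + π10 * (a1 * b0)) =
      δ * (a0 * (b1 - b0)) + δ * (a1 * b0) + ((π10 + π11) * (π01 + π11)) * (a1 * b1) := by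
    have : π00 = 1 - π01 - π10 - π11 := by linarith
    rw [this, hδ]; ring
  nlinarith [mul_nonneg hδ0 (mul_nonneg ha0 (by linarith : (0:ℝ) ≤ b1 - b0)),
    mul_nonneg hδ0 (mul_nonneg (le_trans ha0 ha1) hb0),
    mul_nonneg (mul_nonneg (by linarith : (0:ℝ) ≤ π10 + π11) (by linarith : (0:ℝ) ≤ π01 + π11))
      (mul_nonneg (le_trans ha0 ha1) (le_trans hb0 hb1))]
end

section
/- Let $t_1,t_2\in[0,1]$. Suppose $F^0_1,F^0_2,F^1_1,F^1_2:[0,1]\to\mathbb{R}$ satisfy $0\le F^0_k(t)\le F^1_k(t)$ for all $t\in[0,1]$ and $k=1,2$. Let $\pi_{00},\pi_{01},\pi_{10},\pi_{11}\ge 0$ with $\pi_{00}+\pi_{01}+\pi_{10}+\pi_{11}=1$, set $\pi_1=\pi_{10}+\pi_{11}$, $\pi_2=\pi_{01}+\pi_{11}$, and define $F_k(t)=(1-\pi_k)F^0_k(t)+\pi_k F^1_k(t)$. If $\pi_{11}\ge\pi_1\pi_2$, then $F_1(t_1)F_2(t_2)-\pi_{11}F^0_1(t_1)F^0_2(t_2)\ge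 \pi_{00}F^0_1(t_1)F^0_2(t_2)+\pi_{01}F^0_1(t_1)F^1_2(t_2)+\pi_{10}F^1_1(t_1)F^0_2(t_2)$. -/
/-- Refined inequality of Section 6.2: a tightening of the key inequality used to
construct a less conservative false discovery rate estimator. -/
theorem refined_inequality
    (t1 t2 : ℝ) (ht1 : t1 ∈ Set.Icc (0:ℝ) 1) (ht2 : t2 ∈ Set.Icc (0:ℝ) 1)
    (F01 F02 F11 F12 : ℝ → ℝ)
    (h1 : ∀ t ∈ Set.Icc (0:ℝ) 1, 0 ≤ F01 t ∧ F01 t ≤ F11 t)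
    (h2 : ∀ t ∈ Set.Icc (0:ℝ) 1, 0 ≤ F02 t ∧ F02 t ≤ F12 t)
    (π00 π01 π10 π11 : ℝ)
    (hπ00 : 0 ≤ π00) (hπ01 : 0 ≤ π01) (hπ10 : 0 ≤ π10) (hπ11 : 0 ≤ π11)
    (hsum : π00 + π01 + π10 + π11 = 1)
    (hdep : π11 ≥ (π10 + π11) * (π01 + π11)) :
    ((1 - (π10 + π11)) * F01 t1 + (π10 + π11) * F11 t1) *
          ((1 - (π01 + π11)) * F02 t2 + (π01 + π11) * F12 t2) -
        π11 * (F01 t1 * F02 t2) ≥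
      π00 * (F01 t1 * F02 t2) + π01 * (F01 t1 * F12 t2) + π10 * (F11 t1 * F02 t2) := by
  obtain ⟨ha, haA⟩ := h1 t1 ht1
  obtain ⟨hb, hbB⟩ := h2 t2 ht2
  set a := F01 t1; set A := F11 t1; set b := F02 t2; set B := F12 t2
  have hp : 0 ≤ (π10 + π11) * (π01 + π11) := by positivity
  have h00 : π00 = 1 - π01 - π10 - π11 := by linarith
  have key : ((1 - (π10 + π11)) * a + (π10 + π11) * A) *
          ((1 - (π01 + π11)) * b + (π01 + π11) * B) - π11 * (a * b)
      - (π00 * (a * b) + π01 * (a * B) + π10 * (A * b))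
      = (π10 + π11) * (π01 + π11) * ((A - a) * B + a * (B - b))
        + (π11 - (π10 + π11) * (π01 + π11)) * ((A - a) * b + a * (B - b)) := by
    rw [h00]; ring
  nlinarith [mul_nonneg (mul_nonneg hp (sub_nonneg.2 haA)) (hb.trans hbB),
    mul_nonneg (mul_nonneg hp ha) (sub_nonneg.2 hbB),
    mul_nonneg (mul_nonneg (sub_nonneg.2 hdep) (sub_nonneg.2 haA)) hb,
    mul_nonneg (mul_nonneg (sub_nonneg.2 hdep) ha) (sub_nonneg.2 hbB), key]
end

section
/- Let $(X_j)_{j\ge 1}$ be independent real-valued random variables, where $X_j$ has cumulative distribution function $F_j$. Suppose there exists a continuous cumulative distribution function $F$ such that $\sup_{t\in\mathbb{R}}|p^{-1}\sum_{j\le p}F_j(t)-F(t)|\to 0$ as $p\to\infty$. Then, with $\hat F_p(t)=p^{-1}\sum_{j\le p}\mathbf{1}(X_j\le t)$ the empirical distribution function, almost surely $\sup_{t\in\mathbb{R}}|\hat F_p(t)-F(t)|\to 0$ as $p\to\infty$. -/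
open MeasureTheory ProbabilityTheory Filter Set
open scoped ENNReal NNReal

noncomputable section

/-- The empirical distribution function of the first `p` variables. -/
def empF {Ω : Type*} (X : ℕ → Ω → ℝ) (p : ℕ) (t : ℝ) (ω : Ω) : ℝ :=
  (p : ℝ)⁻¹ * ∑ j ∈ Finset.range p, if X j ω ≤ t then 1 else 0

section AuxLemmas

lemma gc_sandwich {u v : ℕ → ℝ} (hu : Monotone u) (hv : Monotone v)
    (hvinc : ∀ p q : ℕ, p ≤ q → v q - v p ≤ (q : ℝ) - (p : ℝ))
    (h : Tendsto (fun n : ℕ => ((n ^ 2 : ℕ) : ℝ)⁻¹ * (u (n ^ 2) - v (n ^ 2))) atTop (nhds 0)) :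
    Tendsto (fun p : ℕ => (p : ℝ)⁻¹ * (u p - v p)) atTop (nhds 0) := by
  set e : ℕ → ℝ := fun n => |((n ^ 2 : ℕ) : ℝ)⁻¹ * (u (n ^ 2) - v (n ^ 2))| with he_def
  have he : Tendsto e atTop (nhds 0) := by
    have := h.abs
    simpa only [abs_zero] using this
  have heE : ∀ n : ℕ, 1 ≤ n → |u (n ^ 2) - v (n ^ 2)| = (n : ℝ) ^ 2 * e n := by
    intro n hn
    have hn0 : (0 : ℝ) < (n : ℝ) ^ 2 := by positivity
    have : e n = ((n : ℝ) ^ 2)⁻¹ * |u (n ^ 2) - v (n ^ 2)| := by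
      rw [he_def]
      push_cast
      rw [abs_mul, abs_of_nonneg (by positivity : (0:ℝ) ≤ ((n:ℝ)^2)⁻¹)]
    rw [this]
    field_simp
  set g : ℕ → ℝ := fun n => e n + 4 * e (n + 1) + 3 / (n : ℝ) with hg_def
  have hg : Tendsto g atTop (nhds 0) := by
    have h1 : Tendsto (fun n : ℕ => 4 * e (n + 1)) atTop (nhds 0) := by
      have := (he.comp (tendsto_add_atTop_nat 1)).const_mul 4
      simpa [Function.comp] using this
    have h2 : Tendsto (fun n : ℕ => 3 / (n : ℝ)) atTop (nhds 0) :=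
      tendsto_const_div_atTop_nhds_zero_nat 3
    have := (he.add h1).add h2
    simpa using this
  have hsqrt : Tendsto (fun p : ℕ => Nat.sqrt p) atTop atTop := by
    apply tendsto_atTop_atTop.2
    intro b
    exact ⟨b * b, fun p hp => Nat.le_sqrt.2 hp⟩
  have hgs : Tendsto (fun p : ℕ => g (Nat.sqrt p)) atTop (nhds 0) := hg.comp hsqrt
  have key : ∀ p : ℕ, 1 ≤ p → |(p : ℝ)⁻¹ * (u p - v p)| ≤ g (Nat.sqrt p) := by
    intro p hp
    set n := Nat.sqrt p with hn_def
    have hn1 : 1 ≤ n := Nat.le_sqrt.2 (by simpa using hp)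
    have hlow : n ^ 2 ≤ p := Nat.sqrt_le' p
    have hhigh : p ≤ (n + 1) ^ 2 := le_of_lt (Nat.lt_succ_sqrt' p)
    have hnR : (1 : ℝ) ≤ (n : ℝ) := by exact_mod_cast hn1
    have hn0 : (0 : ℝ) < (n : ℝ) ^ 2 := by positivity
    have hpR : ((n : ℝ) ^ 2) ≤ (p : ℝ) := by exact_mod_cast hlow
    have hp0 : (0 : ℝ) < (p : ℝ) := by positivity
    -- bounds on |u p - v p|
    have hub : u p - v p ≤ |u ((n+1)^2) - v ((n+1)^2)| + (3 : ℝ) * n := by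
      have h1 : u p ≤ u ((n + 1) ^ 2) := hu hhigh
      have h2 : v (n ^ 2) ≤ v p := hv hlow
      have h3 : v ((n+1)^2) - v (n^2) ≤ (((n+1)^2 : ℕ) : ℝ) - ((n^2 : ℕ) : ℝ) :=
        hvinc _ _ (by nlinarith)
      have h4 : (((n+1)^2 : ℕ) : ℝ) - ((n^2 : ℕ) : ℝ) ≤ 3 * (n : ℝ) := by
        push_cast; nlinarith
      have h5 : u ((n+1)^2) - v ((n+1)^2) ≤ |u ((n+1)^2) - v ((n+1)^2)| := le_abs_self _
      linarith
    have hlb : -( |u (n^2) - v (n^2)| + (3 : ℝ) * n) ≤ u p - v p := by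
      have h1 : u (n ^ 2) ≤ u p := hu hlow
      have h2 : v p ≤ v ((n+1) ^ 2) := hv hhigh
      have h3 : v ((n+1)^2) - v (n^2) ≤ (((n+1)^2 : ℕ) : ℝ) - ((n^2 : ℕ) : ℝ) :=
        hvinc _ _ (by nlinarith)
      have h4 : (((n+1)^2 : ℕ) : ℝ) - ((n^2 : ℕ) : ℝ) ≤ 3 * (n : ℝ) := by
        push_cast; nlinarith
      have h5 : -|u (n^2) - v (n^2)| ≤ u (n^2) - v (n^2) := neg_abs_le _
      linarith
    have habs : |u p - v p| ≤ |u (n^2) - v (n^2)| + |u ((n+1)^2) - v ((n+1)^2)| + 3 * (n : ℝ) := by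
      rw [abs_le]
      constructor
      · have := abs_nonneg (u ((n+1)^2) - v ((n+1)^2))
        linarith
      · have := abs_nonneg (u (n^2) - v (n^2))
        linarith
    rw [abs_mul, abs_of_nonneg (by positivity : (0:ℝ) ≤ ((p:ℝ))⁻¹)]
    have hinv : ((p : ℝ))⁻¹ ≤ ((n : ℝ) ^ 2)⁻¹ := by
      apply inv_anti₀ hn0 hpR
    have step1 : ((p : ℝ))⁻¹ * |u p - v p| ≤ ((n : ℝ) ^ 2)⁻¹ * (|u (n^2) - v (n^2)| + |u ((n+1)^2) - v ((n+1)^2)| + 3 * (n : ℝ)) := by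
      calc ((p : ℝ))⁻¹ * |u p - v p| ≤ ((n : ℝ) ^ 2)⁻¹ * |u p - v p| := by
            apply mul_le_mul_of_nonneg_right hinv (abs_nonneg _)
        _ ≤ _ := by apply mul_le_mul_of_nonneg_left habs (by positivity)
    refine step1.trans ?_
    rw [heE n hn1, heE (n+1) (by omega)]
    have hen1 : (0:ℝ) ≤ e (n+1) := abs_nonneg _
    have hexp : ((n:ℝ)^2)⁻¹ * ((n:ℝ)^2 * e n + ((n:ℝ)+1)^2 * e (n+1) + 3 * n) ≤ e n + 4 * e (n+1) + 3 / n := by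
      have h4n : ((n:ℝ)+1)^2 ≤ 4 * (n:ℝ)^2 := by nlinarith
      have expand : ((n:ℝ)^2)⁻¹ * ((n:ℝ)^2 * e n + ((n:ℝ)+1)^2 * e (n+1) + 3 * n)
          = e n + ((n:ℝ)^2)⁻¹ * ((n:ℝ)+1)^2 * e (n+1) + 3 / n := by
        field_simp
      rw [expand]
      have : ((n:ℝ)^2)⁻¹ * ((n:ℝ)+1)^2 * e (n+1) ≤ 4 * e (n+1) := by
        apply mul_le_mul_of_nonneg_right _ hen1
        rw [inv_mul_le_iff₀ hn0]
        nlinarith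
      linarith
    have hcast : ((n:ℝ)+1)^2 = (((n+1:ℕ)):ℝ)^2 := by push_cast; ring
    rw [hg_def]
    simp only []
    calc ((n : ℝ) ^ 2)⁻¹ * ((n:ℝ)^2 * e n + ((n+1:ℕ):ℝ)^2 * e (n+1) + 3 * (n : ℝ))
        = ((n : ℝ) ^ 2)⁻¹ * ((n:ℝ)^2 * e n + ((n:ℝ)+1)^2 * e (n+1) + 3 * (n : ℝ)) := by
          rw [hcast]
      _ ≤ e n + 4 * e (n + 1) + 3 / (n:ℝ) := hexp
  have : Tendsto (fun p : ℕ => |(p : ℝ)⁻¹ * (u p - v p)|) atTop (nhds 0) := by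
    apply squeeze_zero' (Eventually.of_forall fun p => abs_nonneg _) _ hgs
    filter_upwards [eventually_ge_atTop 1] with p hp
    exact key p hp
  rw [tendsto_zero_iff_abs_tendsto_zero]
  simpa [Function.comp_def] using this


/-- Pointwise strong law at a fixed point `t`. -/
lemma gc_pointwise {Ω : Type*} [MeasurableSpace Ω] (μ : Measure Ω) [IsProbabilityMeasure μ]
    (X : ℕ → Ω → ℝ) (hmeas : ∀ j, Measurable (X j))
    (hindep : iIndepFun X μ)
    (F : ℕ → ℝ → ℝ) (hF : ∀ j t, F j t = (μ {ω | X j ω ≤ t}).toReal)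
    (t : ℝ) (L : ℝ)
    (hL : Tendsto (fun p : ℕ => (p : ℝ)⁻¹ * (∑ j ∈ Finset.range p, F j t)) atTop (nhds L)) :
    ∀ᵐ ω ∂μ, Tendsto
      (fun p : ℕ => (p : ℝ)⁻¹ * ∑ j ∈ Finset.range p, (if X j ω ≤ t then (1:ℝ) else 0))
      atTop (nhds L) := by
  classical
  set φ : ℝ → ℝ := fun x => if x ≤ t then (1:ℝ) else 0 with hφ_def
  have hφmeas : Measurable φ := by
    apply Measurable.ite measurableSet_Iic measurable_const measurable_const
  set Y : ℕ → Ω → ℝ := fun j => φ ∘ X j with hY_def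
  have hYmeas : ∀ j, Measurable (Y j) := fun j => hφmeas.comp (hmeas j)
  have hsetmeas : ∀ j, MeasurableSet {ω | X j ω ≤ t} := fun j => (hmeas j) measurableSet_Iic
  have hYeq : ∀ j, Y j = ({ω | X j ω ≤ t}).indicator (fun _ => (1:ℝ)) := by
    intro j; funext ω
    simp only [hY_def, Function.comp_apply, hφ_def, Set.indicator_apply, Set.mem_setOf_eq]
  have hYint : ∀ j, μ[Y j] = F j t := by
    intro j
    rw [hYeq j, integral_indicator_const _ (hsetmeas j), hF]
    simp
    rfl
  have hYbd : ∀ j ω, ‖Y j ω‖ ≤ 1 := by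
    intro j ω
    simp only [hY_def, Function.comp_apply, hφ_def]
    split <;> simp
  have hY01 : ∀ j ω, 0 ≤ Y j ω ∧ Y j ω ≤ 1 := by
    intro j ω
    simp only [hY_def, Function.comp_apply, hφ_def]
    split <;> norm_num
  have hYmem2 : ∀ j, MemLp (Y j) 2 μ := fun j =>
    MemLp.of_bound (hYmeas j).aestronglyMeasurable 1 (Eventually.of_forall (hYbd j))
  have hYintg : ∀ j, Integrable (Y j) μ := fun j => (hYmem2 j).integrable one_le_two
  have hF01 : ∀ j, 0 ≤ F j t ∧ F j t ≤ 1 := by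
    intro j
    rw [hF]
    refine ⟨ENNReal.toReal_nonneg, ?_⟩
    have h1 : μ {ω | X j ω ≤ t} ≤ 1 := prob_le_one
    calc (μ {ω | X j ω ≤ t}).toReal ≤ (1 : ℝ≥0∞).toReal :=
          ENNReal.toReal_mono (by norm_num) h1
      _ = 1 := by simp
  -- variance of each Y j is at most 1
  have hYvar : ∀ j, variance (Y j) μ ≤ 1 := by
    intro j
    rw [variance_eq_sub (hYmem2 j)]
    have hsq : (fun ω => (Y j ω) ^ 2) = Y j := by
      funext ω
      simp only [hY_def, Function.comp_apply, hφ_def]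
      split <;> norm_num
    have h1 : μ[(Y j) ^ 2] = F j t := by
      rw [show ((Y j) ^ 2 : Ω → ℝ) = fun ω => (Y j ω) ^ 2 from rfl, hsq, hYint j]
    rw [h1]
    nlinarith [(hF01 j).1, (hF01 j).2, sq_nonneg (μ[Y j])]
  -- partial sums
  set S : ℕ → Ω → ℝ := fun p => ∑ j ∈ Finset.range p, Y j with hS_def
  have hSapp : ∀ p ω, S p ω = ∑ j ∈ Finset.range p, Y j ω := by
    intro p ω; rw [hS_def]; simp [Finset.sum_apply]
  have hSfun : ∀ p, S p = fun ω => ∑ j ∈ Finset.range p, Y j ω := by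
    intro p; funext ω; exact hSapp p ω
  have hSmeas : ∀ p, Measurable (S p) := by
    intro p
    rw [hSfun]
    exact Finset.measurable_sum _ fun j _ => hYmeas j
  have hSmem2 : ∀ p, MemLp (S p) 2 μ := fun p => memLp_finsetSum' _ fun j _ => hYmem2 j
  have hSint : ∀ p, μ[S p] = ∑ j ∈ Finset.range p, F j t := by
    intro p
    rw [hSfun]
    rw [integral_finset_sum _ fun j _ => hYintg j]
    exact Finset.sum_congr rfl fun j _ => hYint j
  have hSvar : ∀ p, variance (S p) μ ≤ (p : ℝ) := by
    intro p
    rw [hS_def, IndepFun.variance_sum (fun j _ => hYmem2 j)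
      (fun i _ j _ hij => (hindep.indepFun hij).comp hφmeas hφmeas)]
    calc ∑ j ∈ Finset.range p, variance (Y j) μ ≤ ∑ _j ∈ Finset.range p, (1:ℝ) :=
          Finset.sum_le_sum fun j _ => hYvar j
      _ = p := by simp
  -- centered normalized subsequence variables
  set W : ℕ → Ω → ℝ := fun n ω => ((n ^ 2 : ℕ) : ℝ)⁻¹ * (S (n ^ 2) ω - μ[S (n ^ 2)]) with hW_def
  have hWmeas : ∀ n, Measurable (W n) := fun n =>
    measurable_const.mul ((hSmeas (n ^ 2)).sub measurable_const)
  set f : ℕ → Ω → ℝ≥0∞ := fun n ω => ENNReal.ofReal ((W n ω) ^ 2) with hf_def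
  have hfmeas : ∀ n, Measurable (f n) := fun n => ((hWmeas n).pow_const 2).ennreal_ofReal
  have hflint : ∀ n, ∫⁻ ω, f n ω ∂μ ≤ ENNReal.ofReal (((n : ℝ) ^ 2)⁻¹) := by
    intro n
    have hc0 : (0:ℝ) ≤ ((n ^ 2 : ℕ) : ℝ)⁻¹ := by positivity
    have h1 : ∀ ω, f n ω = ENNReal.ofReal ((((n ^ 2 : ℕ) : ℝ)⁻¹) ^ 2) *
        ENNReal.ofReal ((S (n ^ 2) ω - μ[S (n ^ 2)]) ^ 2) := by
      intro ω
      rw [hf_def]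
      simp only [hW_def]
      rw [mul_pow, ENNReal.ofReal_mul (by positivity)]
    calc ∫⁻ ω, f n ω ∂μ
        = ENNReal.ofReal ((((n ^ 2 : ℕ) : ℝ)⁻¹) ^ 2) *
            ∫⁻ ω, ENNReal.ofReal ((S (n ^ 2) ω - μ[S (n ^ 2)]) ^ 2) ∂μ := by
          simp_rw [h1]
          rw [lintegral_const_mul' _ _ ENNReal.ofReal_ne_top]
      _ = ENNReal.ofReal ((((n ^ 2 : ℕ) : ℝ)⁻¹) ^ 2) * evariance (S (n ^ 2)) μ := by
          rw [← evariance_eq_lintegral_ofReal]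
      _ = ENNReal.ofReal ((((n ^ 2 : ℕ) : ℝ)⁻¹) ^ 2) * ENNReal.ofReal (variance (S (n ^ 2)) μ) := by
          rw [variance, ENNReal.ofReal_toReal (hSmem2 (n ^ 2)).evariance_lt_top.ne]
      _ = ENNReal.ofReal ((((n ^ 2 : ℕ) : ℝ)⁻¹) ^ 2 * variance (S (n ^ 2)) μ) := by
          rw [ENNReal.ofReal_mul (by positivity)]
      _ ≤ ENNReal.ofReal (((n : ℝ) ^ 2)⁻¹) := by
          apply ENNReal.ofReal_le_ofReal
          rcases Nat.eq_zero_or_pos n with hn | hn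
          · subst hn; simp
          have hnR : (0:ℝ) < (n:ℝ) := by exact_mod_cast hn
          have hvarb := hSvar (n ^ 2)
          have hvnn := variance_nonneg (S (n ^ 2)) μ
          have hcast : ((n ^ 2 : ℕ) : ℝ) = (n : ℝ) ^ 2 := by push_cast; ring
          rw [hcast]
          calc (((n:ℝ) ^ 2)⁻¹) ^ 2 * variance (S (n ^ 2)) μ
              ≤ (((n:ℝ) ^ 2)⁻¹) ^ 2 * ((n:ℝ) ^ 2) := by
                apply mul_le_mul_of_nonneg_left _ (by positivity)
                rw [← hcast]; exact hvarb
            _ = ((n:ℝ) ^ 2)⁻¹ := by field_simp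
  have hsummable : Summable (fun n : ℕ => ((n : ℝ) ^ 2)⁻¹) := by
    have := Real.summable_one_div_nat_pow.2 (by norm_num : 1 < 2)
    simpa [one_div] using this
  have htsum_ne : (∑' n : ℕ, ENNReal.ofReal (((n : ℝ) ^ 2)⁻¹)) ≠ ⊤ := by
    rw [← ENNReal.ofReal_tsum_of_nonneg (fun n => by positivity) hsummable]
    exact ENNReal.ofReal_ne_top
  have hkey : ∫⁻ ω, (∑' n, f n ω) ∂μ ≠ ⊤ := by
    rw [lintegral_tsum fun n => (hfmeas n).aemeasurable]
    exact ne_top_of_le_ne_top htsum_ne (ENNReal.tsum_le_tsum hflint)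
  have hae : ∀ᵐ ω ∂μ, (∑' n, f n ω) ≠ ⊤ := by
    filter_upwards [ae_lt_top (Measurable.ennreal_tsum hfmeas) hkey] with ω hω
    exact hω.ne
  filter_upwards [hae] with ω hω
  have h0 : Tendsto (fun n => f n ω) atTop (nhds 0) :=
    ENNReal.tendsto_atTop_zero_of_tsum_ne_top hω
  have h1 : Tendsto (fun n => (W n ω) ^ 2) atTop (nhds 0) := by
    have h2 := (ENNReal.tendsto_toReal (by simp : (0:ℝ≥0∞) ≠ ⊤)).comp h0
    have h3 : ∀ n, (f n ω).toReal = (W n ω) ^ 2 := fun n => ENNReal.toReal_ofReal (sq_nonneg _)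
    simp only [Function.comp_def] at h2
    simpa [h3] using h2
  have h2 : Tendsto (fun n => |W n ω|) atTop (nhds 0) := by
    have h3 := (Real.continuous_sqrt.tendsto 0).comp h1
    simp only [Function.comp_def] at h3
    simpa [Real.sqrt_sq_eq_abs] using h3
  have hW0 : Tendsto (fun n => W n ω) atTop (nhds 0) := by
    rw [tendsto_zero_iff_abs_tendsto_zero]
    simpa [Function.comp_def] using h2
  -- apply the sandwich lemma
  have hu : Monotone (fun p => S p ω) := by
    intro p q hpq
    simp only [hSapp]
    exact Finset.sum_le_sum_of_subset_of_nonneg (Finset.range_subset_range.2 hpq)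
      (fun j _ _ => (hY01 j ω).1)
  have hv : Monotone (fun p => ∑ j ∈ Finset.range p, F j t) := by
    intro p q hpq
    exact Finset.sum_le_sum_of_subset_of_nonneg (Finset.range_subset_range.2 hpq)
      (fun j _ _ => (hF01 j).1)
  have hvinc : ∀ p q : ℕ, p ≤ q →
      (∑ j ∈ Finset.range q, F j t) - (∑ j ∈ Finset.range p, F j t) ≤ (q : ℝ) - (p : ℝ) := by
    intro p q hpq
    have hIco : ∑ j ∈ Finset.Ico p q, F j t
        = (∑ j ∈ Finset.range q, F j t) - (∑ j ∈ Finset.range p, F j t) := by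
      rw [Finset.sum_Ico_eq_sub _ hpq]
    rw [← hIco]
    calc ∑ j ∈ Finset.Ico p q, F j t ≤ ∑ _j ∈ Finset.Ico p q, (1:ℝ) :=
          Finset.sum_le_sum fun j _ => (hF01 j).2
      _ = ((q - p : ℕ) : ℝ) := by simp [Nat.card_Ico]
      _ = (q : ℝ) - (p : ℝ) := by rw [Nat.cast_sub hpq]
  have hsub : Tendsto (fun n : ℕ => ((n ^ 2 : ℕ) : ℝ)⁻¹ *
      ((fun p => S p ω) (n ^ 2) - (fun p => ∑ j ∈ Finset.range p, F j t) (n ^ 2)))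
      atTop (nhds 0) := by
    have heq : ∀ n : ℕ, ((n ^ 2 : ℕ) : ℝ)⁻¹ * (S (n ^ 2) ω - ∑ j ∈ Finset.range (n ^ 2), F j t)
        = W n ω := by
      intro n
      rw [hW_def]
      simp only [hSint]
    simpa only [heq] using hW0
  have hmain := gc_sandwich hu hv hvinc hsub
  have hfinal := hmain.add hL
  rw [zero_add] at hfinal
  have heq2 : (fun p : ℕ => (p : ℝ)⁻¹ * ∑ j ∈ Finset.range p, (if X j ω ≤ t then (1:ℝ) else 0))
      = fun p : ℕ => (p : ℝ)⁻¹ * ((fun p => S p ω) p - (fun p => ∑ j ∈ Finset.range p, F j t) p)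
        + (p : ℝ)⁻¹ * ∑ j ∈ Finset.range p, F j t := by
    funext p
    have hYω : ∀ j, Y j ω = if X j ω ≤ t then (1:ℝ) else 0 := fun j => rfl
    simp only [hSapp, hYω]
    ring
  rw [heq2]
  exact hfinal


/-- averaging helper -/
lemma gc_avg_mem (p : ℕ) (a : ℕ → ℝ) (h : ∀ j, 0 ≤ a j ∧ a j ≤ 1) :
    0 ≤ (p : ℝ)⁻¹ * ∑ j ∈ Finset.range p, a j ∧
      (p : ℝ)⁻¹ * ∑ j ∈ Finset.range p, a j ≤ 1 := by
  constructor
  · apply mul_nonneg (by positivity)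
    exact Finset.sum_nonneg fun j _ => (h j).1
  · rcases Nat.eq_zero_or_pos p with hp | hp
    · subst hp; simp
    have hpR : (0:ℝ) < p := by exact_mod_cast hp
    have hsum : ∑ j ∈ Finset.range p, a j ≤ (p : ℝ) := by
      calc ∑ j ∈ Finset.range p, a j ≤ ∑ _j ∈ Finset.range p, (1:ℝ) :=
            Finset.sum_le_sum fun j _ => (h j).2
        _ = p := by simp
    calc (p : ℝ)⁻¹ * ∑ j ∈ Finset.range p, a j ≤ (p:ℝ)⁻¹ * p := by
          apply mul_le_mul_of_nonneg_left hsum (by positivity)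
      _ = 1 := by field_simp


end AuxLemmas

/-- A Glivenko–Cantelli-type theorem for independent but non-identically distributed
random variables: if the averaged distribution functions converge uniformly to a
continuous CDF, then the empirical distribution function converges uniformly to that
limit almost surely. -/
theorem glivenko_cantelli_non_iid
    {Ω : Type*} [MeasurableSpace Ω] (μ : Measure Ω) [IsProbabilityMeasure μ]
    (X : ℕ → Ω → ℝ) (hmeas : ∀ j, Measurable (X j))
    (hindep : iIndepFun X μ)
    (F : ℕ → ℝ → ℝ) (hF : ∀ j t, F j t = (μ {ω | X j ω ≤ t}).toReal)
    (Flim : ℝ → ℝ) (hFlimcont : Continuous Flim)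
    (hFlimmono : Monotone Flim)
    (hFlim0 : Tendsto Flim atBot (nhds 0)) (hFlim1 : Tendsto Flim atTop (nhds 1))
    (hunif : Tendsto
      (fun p : ℕ => ⨆ t : ℝ, |(p : ℝ)⁻¹ * (∑ j ∈ Finset.range p, F j t) - Flim t|)
      atTop (nhds 0)) :
    ∀ᵐ ω ∂μ, Tendsto (fun p => ⨆ t : ℝ, |empF X p t ω - Flim t|) atTop (nhds 0) := by
  have hptae : ∀ (t L : ℝ),
      Tendsto (fun p : ℕ => (p : ℝ)⁻¹ * (∑ j ∈ Finset.range p, F j t)) atTop (nhds L) →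
      ∀ᵐ ω ∂μ, Tendsto (fun p : ℕ => empF X p t ω) atTop (nhds L) :=
    fun t L hL => gc_pointwise μ X hmeas hindep F hF t L hL
  classical
  have hF01 : ∀ j s, 0 ≤ F j s ∧ F j s ≤ 1 := by
    intro j s
    rw [hF]
    refine ⟨ENNReal.toReal_nonneg, ?_⟩
    calc (μ {ω | X j ω ≤ s}).toReal ≤ (1 : ℝ≥0∞).toReal :=
          ENNReal.toReal_mono (by norm_num) prob_le_one
      _ = 1 := by simp
  have hFlim01 : ∀ s, 0 ≤ Flim s ∧ Flim s ≤ 1 := by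
    intro s
    constructor
    · exact le_of_tendsto hFlim0 ((eventually_le_atBot s).mono fun r hr => hFlimmono hr)
    · exact ge_of_tendsto hFlim1 ((eventually_ge_atTop s).mono fun r hr => hFlimmono hr)
  have havg01 : ∀ (p : ℕ) (s : ℝ), 0 ≤ (p : ℝ)⁻¹ * (∑ j ∈ Finset.range p, F j s) ∧
      (p : ℝ)⁻¹ * (∑ j ∈ Finset.range p, F j s) ≤ 1 :=
    fun p s => gc_avg_mem p (fun j => F j s) (fun j => hF01 j s)
  have hBddunif : ∀ p : ℕ, BddAbove (Set.range fun s : ℝ =>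
      |(p : ℝ)⁻¹ * (∑ j ∈ Finset.range p, F j s) - Flim s|) := by
    intro p
    refine ⟨1, ?_⟩
    rintro _ ⟨s, rfl⟩
    have h1 := havg01 p s
    have h2 := hFlim01 s
    rw [abs_le]
    constructor <;> [linarith [h1.1, h2.2]; linarith [h1.2, h2.1]]
  have hpt : ∀ s : ℝ, Tendsto (fun p : ℕ => (p : ℝ)⁻¹ * (∑ j ∈ Finset.range p, F j s))
      atTop (nhds (Flim s)) := by
    intro s
    have habs : Tendsto (fun p : ℕ =>
        |(p : ℝ)⁻¹ * (∑ j ∈ Finset.range p, F j s) - Flim s|) atTop (nhds 0) := by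
      apply squeeze_zero (fun p => abs_nonneg _) (fun p => le_ciSup (hBddunif p) s) hunif
    have hsub : Tendsto (fun p : ℕ =>
        (p : ℝ)⁻¹ * (∑ j ∈ Finset.range p, F j s) - Flim s) atTop (nhds 0) := by
      rw [tendsto_zero_iff_abs_tendsto_zero]
      simpa [Function.comp_def] using habs
    have := hsub.add (tendsto_const_nhds (x := Flim s) (f := atTop (α := ℕ)))
    simpa using this
  -- grid points via IVT
  have hgrid : ∀ K k : ℕ, ∃ x : ℝ, 1 ≤ k → k ≤ K - 1 → Flim x = (k : ℝ) / K := by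
    intro K k
    by_cases h1 : 1 ≤ k ∧ k ≤ K - 1
    · obtain ⟨hk1, hk2⟩ := h1
      have hK2 : 2 ≤ K := by omega
      have hkK : k < K := by omega
      have hKR : (0:ℝ) < K := by exact_mod_cast (by omega : 0 < K)
      have h0 : (0:ℝ) < (k : ℝ) / K := by
        apply div_pos (by exact_mod_cast hk1) hKR
      have hlt1 : (k : ℝ) / K < 1 := by
        rw [div_lt_one hKR]
        exact_mod_cast hkK
      have hle : Flim ≤ᶠ[atBot] (fun _ => (k : ℝ) / K) :=
        (hFlim0.eventually_lt_const h0).mono fun s hs => hs.le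
      have hge : (fun _ : ℝ => (k : ℝ) / K) ≤ᶠ[atTop] Flim :=
        (hFlim1.eventually_const_lt hlt1).mono fun s hs => hs.le
      obtain ⟨x, hx⟩ := intermediate_value_univ₂_eventually₂ hFlimcont continuous_const hle hge
      exact ⟨x, fun _ _ => hx⟩
    · exact ⟨0, fun ha hb => absurd ⟨ha, hb⟩ h1⟩
  choose xg hxg using hgrid
  -- almost sure convergence at all grid points
  have hae : ∀ᵐ ω ∂μ, ∀ K k : ℕ,
      Tendsto (fun p : ℕ => empF X p (xg K k) ω) atTop (nhds (Flim (xg K k))) := by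
    rw [ae_all_iff]
    intro K
    rw [ae_all_iff]
    intro k
    exact hptae (xg K k) (Flim (xg K k)) (hpt (xg K k))
  -- empirical df properties
  have hemp01 : ∀ p s ω, 0 ≤ empF X p s ω ∧ empF X p s ω ≤ 1 := by
    intro p s ω
    exact gc_avg_mem p _ (fun j => by by_cases h : X j ω ≤ s <;> simp [h])
  have hempmono : ∀ (p : ℕ) (ω : Ω), Monotone (fun s => empF X p s ω) := by
    intro p ω s s' hss'
    apply mul_le_mul_of_nonneg_left _ (by positivity)
    apply Finset.sum_le_sum
    intro j _
    by_cases h : X j ω ≤ s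
    · simp [h, h.trans hss']
    · by_cases h' : X j ω ≤ s' <;> simp [h, h']
  filter_upwards [hae] with ω hω
  rw [NormedAddCommGroup.tendsto_nhds_zero]
  intro ε hε
  obtain ⟨K0, hK0⟩ := exists_nat_one_div_lt (show (0:ℝ) < ε/2 by linarith)
  set K : ℕ := K0 + 1 with hK_def
  have hK1 : 1 ≤ K := by omega
  have hKR : (0:ℝ) < K := by exact_mod_cast (by omega : 0 < K)
  set b : ℝ := 1 / (K : ℝ) with hb_def
  have hbK : (K : ℝ) * b = 1 := by
    rw [hb_def]; field_simp
  have hbε : b < ε / 2 := by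
    rw [hb_def]
    have : ((K : ℕ) : ℝ) = (K0 : ℝ) + 1 := by exact_mod_cast hK_def
    rw [this]
    exact hK0
  have hb0 : 0 < b := by rw [hb_def]; positivity
  have hev : ∀ᶠ p : ℕ in atTop, ∀ k ∈ Finset.Icc 1 (K - 1),
      |empF X p (xg K k) ω - (k : ℝ) / K| < ε / 4 := by
    rw [eventually_all_finset]
    intro k hk
    rw [Finset.mem_Icc] at hk
    have hflimx : Flim (xg K k) = (k : ℝ) / K := hxg K k hk.1 hk.2
    have hconv := hω K k
    rw [hflimx] at hconv
    obtain ⟨N, hN⟩ := Metric.tendsto_atTop.1 hconv (ε / 4) (by linarith)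
    filter_upwards [eventually_ge_atTop N] with p hpN
    have := hN p hpN
    rwa [Real.dist_eq] at this
  filter_upwards [hev] with p hp
  -- per-point bound
  have hB : BddAbove (Set.range fun s : ℝ => |empF X p s ω - Flim s|) := by
    refine ⟨1, ?_⟩
    rintro _ ⟨s, rfl⟩
    have h1 := hemp01 p s ω
    have h2 := hFlim01 s
    rw [abs_le]
    constructor <;> [linarith [h1.1, h2.2]; linarith [h1.2, h2.1]]
  have htb : ∀ s : ℝ, |empF X p s ω - Flim s| ≤ b + ε / 4 := by
    intro s
    obtain ⟨hy0, hy1⟩ := hFlim01 s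
    rw [abs_le]
    constructor
    · -- lower bound
      by_cases hc : 1 < (K : ℝ) * Flim s
      · set j : ℕ := ⌈(K : ℝ) * Flim s⌉₊ - 1 with hj_def
        have hKy0 : (0:ℝ) ≤ (K : ℝ) * Flim s := by positivity
        have hceil2 : 2 ≤ ⌈(K : ℝ) * Flim s⌉₊ := by
          have := Nat.lt_ceil.2 (by exact_mod_cast hc : ((1:ℕ) : ℝ) < (K : ℝ) * Flim s)
          omega
        have hj1 : 1 ≤ j := by omega
        have hjcast : (j : ℝ) = (⌈(K : ℝ) * Flim s⌉₊ : ℝ) - 1 := by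
          rw [hj_def, Nat.cast_sub (by omega : 1 ≤ ⌈(K : ℝ) * Flim s⌉₊)]
          norm_num
        have hjlt : (j : ℝ) < (K : ℝ) * Flim s := by
          rw [hjcast]
          have := Nat.ceil_lt_add_one hKy0
          linarith
        have hjK : j ≤ K - 1 := by
          have hjltK : (j : ℝ) < (K : ℝ) := by
            calc (j : ℝ) < (K : ℝ) * Flim s := hjlt
              _ ≤ (K : ℝ) * 1 := by apply mul_le_mul_of_nonneg_left hy1 (le_of_lt hKR)
              _ = K := by ring
          have : j < K := by exact_mod_cast hjltK
          omega
        have hflimx : Flim (xg K j) = (j : ℝ) / K := hxg K j hj1 hjK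
        have hjy : (j : ℝ) / K < Flim s := by
          rw [div_lt_iff₀ hKR]
          linarith [hjlt]
        have hxs : xg K j ≤ s := by
          by_contra hcon
          push_neg at hcon
          have := hFlimmono hcon.le
          rw [hflimx] at this
          linarith
        have hmono := hempmono p ω hxs
        have hacc := hp j (Finset.mem_Icc.2 ⟨hj1, hjK⟩)
        have hacc' : (j : ℝ) / K - ε / 4 ≤ empF X p (xg K j) ω := by
          have := abs_lt.1 hacc
          linarith [this.1]
        have hyj : Flim s ≤ (j : ℝ) / K + b := by
          have hceil : (K : ℝ) * Flim s ≤ (⌈(K : ℝ) * Flim s⌉₊ : ℝ) := Nat.le_ceil _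
          have h9 : (K : ℝ) * Flim s ≤ (j : ℝ) + 1 := by rw [hjcast]; linarith
          rw [div_add' _ _ _ (ne_of_gt hKR), le_div_iff₀ hKR]
          have hKb : (K:ℝ) * b = 1 := hbK
          nlinarith
        simp only at hmono
        linarith
      · push_neg at hc
        have hyb : Flim s ≤ b := by nlinarith
        have h1 := (hemp01 p s ω).1
        linarith
    · -- upper bound
      by_cases hc : (K : ℝ) * Flim s < (K : ℝ) - 1
      · set j : ℕ := ⌊(K : ℝ) * Flim s⌋₊ + 1 with hj_def
        have hKy0 : (0:ℝ) ≤ (K : ℝ) * Flim s := by positivity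
        have hj1 : 1 ≤ j := by omega
        have hjcast : (j : ℝ) = (⌊(K : ℝ) * Flim s⌋₊ : ℝ) + 1 := by rw [hj_def]; push_cast; ring
        have hfloor : (⌊(K : ℝ) * Flim s⌋₊ : ℝ) ≤ (K : ℝ) * Flim s := Nat.floor_le hKy0
        have hjle : (j : ℝ) ≤ (K : ℝ) * Flim s + 1 := by rw [hjcast]; linarith
        have hjK : j ≤ K - 1 := by
          have hjltK : (j : ℝ) < (K : ℝ) := by linarith
          have : j < K := by exact_mod_cast hjltK
          omega
        have hylt : Flim s < (j : ℝ) / K := by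
          rw [lt_div_iff₀ hKR]
          have := Nat.lt_floor_add_one ((K : ℝ) * Flim s)
          rw [← hjcast] at this
          linarith
        have hflimx : Flim (xg K j) = (j : ℝ) / K := hxg K j hj1 hjK
        have hsx : s ≤ xg K j := by
          by_contra hcon
          push_neg at hcon
          have := hFlimmono hcon.le
          rw [hflimx] at this
          linarith
        have hmono := hempmono p ω hsx
        have hacc := hp j (Finset.mem_Icc.2 ⟨hj1, hjK⟩)
        have hacc' : empF X p (xg K j) ω ≤ (j : ℝ) / K + ε / 4 := by
          have := abs_lt.1 hacc
          linarith [this.2]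
        have hjy : (j : ℝ) / K ≤ Flim s + b := by
          rw [div_le_iff₀ hKR]
          have hKb : (K:ℝ) * b = 1 := hbK
          nlinarith
        simp only at hmono
        linarith
      · push_neg at hc
        have hyb : 1 - b ≤ Flim s := by nlinarith
        have h1 := (hemp01 p s ω).2
        linarith
  have hsup_le : (⨆ s : ℝ, |empF X p s ω - Flim s|) ≤ b + ε / 4 := ciSup_le htb
  have hsup_nonneg : 0 ≤ ⨆ s : ℝ, |empF X p s ω - Flim s| :=
    le_trans (abs_nonneg _) (le_ciSup hB 0)
  rw [Real.norm_eq_abs, abs_of_nonneg hsup_nonneg]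
  linarith
end
end
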